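/- arXiv:1608.06322 — 2 statements merged into one kernel-verified Lean document; each statement's English description precedes it below -/
import Mathlib

section
/- Let G be a finite non-abelian p-group of order p^n with derived subgroup of order p. Then |M(G)| · p ≥ |M(G/G')|. -/
/-!
Present `G` as `π : F ↠ G` with kernel `R`, and `G/N` by `φ ∘ π` with kernel `S ⊇ R`. By the Hopf
formula `M(G) = (R ∩ F') / [F, R]` and `M(G/N) = (S ∩ F') / [F, S]`. When `N` is central, `π` kills
`[F, S]`, so `π` induces a map from `(S ∩ F') / [F, S]` onto a subgroup of `N ∩ G'` whose kernel
`(R ∩ F') / [F, S]` is a quotient of `M(G)`. Hence `|M(G/N)| ≤ |M(G)| · |N ∩ G'|`, with `M(G)`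
finite by Schur's theorem, as `R / [F, R]` is central of finite index in `F / [F, R]`. For `N = G'`
of order `p` in a `p`-group, `N` is automatically central.
-/

/-- The Schur multiplier `M(G) = H₂(G,ℤ)` of a group `G`, defined via the Hopf formula
`M(G) ≅ (R ∩ [F,F]) / [F,R]` for the free presentation `F = FreeGroup G ↠ G`. -/
abbrev schurMultiplier (G : Type*) [Group G] : Type _ :=
  ↥((FreeGroup.lift (id : G → G)).ker ⊓ commutator (FreeGroup G)) ⧸
    Subgroup.subgroupOf ⁅(⊤ : Subgroup (FreeGroup G)), (FreeGroup.lift (id : G → G)).ker⁆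
      ((FreeGroup.lift (id : G → G)).ker ⊓ commutator (FreeGroup G))

open Subgroup Function
open scoped commutatorElement

theorem IsPGroup.le_center_of_card_eq {p : ℕ} [Fact p.Prime] {G : Type*} [Group G]
    (hG : IsPGroup p G) (N : Subgroup G) [N.Normal] (hN : Nat.card N = p) :
    N ≤ center G := by
  have : Fact (Nat.card N).Prime := hN ▸ ‹Fact p.Prime›
  have : Finite N := Nat.finite_of_card_ne_zero this.out.ne_zero
  obtain ⟨b, hb, hb1⟩ :=
    (hG.of_equiv ConjAct.toConjAct).exists_fixed_point_of_prime_dvd_card_of_fixed_point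
      N (hN ▸ dvd_rfl) (a := 1) (fun g => smul_one g)
  have hb_center : (b : G) ∈ center G := by
    rw [← SetLike.mem_coe, ← ConjAct.fixedPoints_eq_center]
    exact fun g => congrArg Subtype.val (hb g)
  rcases ((center G).subgroupOf N).eq_bot_or_eq_top_of_prime_card with h | h
  · have hb_mem : b ∈ (center G).subgroupOf N := mem_subgroupOf.mpr hb_center
    rw [h, mem_bot] at hb_mem
    exact absurd hb_mem.symm hb1
  · exact subgroupOf_eq_top.mp h

theorem Group.finite_commutatorSet_of_finiteIndex_center (G : Type*) [Group G]
    [(center G).FiniteIndex] : Finite (commutatorSet G) := by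
  have hcentral : ∀ g h : G, ∀ z ∈ center G, ∀ w ∈ center G, ⁅g * z, h * w⁆ = ⁅g, h⁆ := by
    intro g h z hz w hw
    rw [mem_center_iff] at hz hw
    have hzx : ∀ x : G, ⁅z, x⁆ = 1 := fun x => commutatorElement_eq_one_iff_mul_comm.mpr (hz x).symm
    have hxw : ∀ x : G, ⁅x, w⁆ = 1 := fun x => commutatorElement_eq_one_iff_mul_comm.mpr (hw x)
    rw [hz g, commutatorElement_mul_left_eq_conj_mul, hzx, mul_one, ← hz, mul_inv_cancel_right,
      commutatorElement_mul_right_eq_mul_conj, hxw, mul_one, mul_inv_cancel_right]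
  refine Set.Finite.subset (Set.finite_range fun q : (G ⧸ center G) × (G ⧸ center G) =>
    ⁅q.1.out, q.2.out⁆) ?_
  rintro _ ⟨g, h, rfl⟩
  obtain ⟨z, hz⟩ := QuotientGroup.mk_out_eq_mul (center G) g
  obtain ⟨w, hw⟩ := QuotientGroup.mk_out_eq_mul (center G) h
  exact ⟨(g, h), by simp only [hz, hw, hcentral g h z z.2 w w.2]⟩

theorem Subgroup.map_commutator_top_le {F₁ F₂ : Type*} [Group F₁] [Group F₂] (ψ : F₁ →* F₂)
    {H : Subgroup F₁} {K : Subgroup F₂} (h : H.map ψ ≤ K) :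
    ⁅(⊤ : Subgroup F₁), H⁆.map ψ ≤ ⁅(⊤ : Subgroup F₂), K⁆ := by
  rw [map_commutator]
  exact commutator_mono le_top h

/-- For surjective `π` from a free group this is `M(G)` by Hopf's formula;
`schurMultiplier G` is the case `π = FreeGroup.lift id`. -/
abbrev HopfQuotient {F G : Type*} [Group F] [Group G] (π : F →* G) : Type _ :=
  ↥(π.ker ⊓ commutator F) ⧸ ⁅(⊤ : Subgroup F), π.ker⁆.subgroupOf (π.ker ⊓ commutator F)

namespace HopfQuotient

variable {F F₁ F₂ G : Type*} [Group F] [Group F₁] [Group F₂] [Group G]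

theorem card_eq (π : F →* G) :
    Nat.card (HopfQuotient π) = ⁅(⊤ : Subgroup F), π.ker⁆.relIndex (π.ker ⊓ commutator F) :=
  rfl

theorem map_ker_le_center (π : F →* G) :
    π.ker.map (QuotientGroup.mk' ⁅(⊤ : Subgroup F), π.ker⁆) ≤
      center (F ⧸ ⁅(⊤ : Subgroup F), π.ker⁆) := by
  rw [← commutator_top_left_eq_bot_iff_le_center,
    ← map_top_of_surjective _ (QuotientGroup.mk'_surjective _), ← map_commutator,
    Subgroup.map_eq_bot_iff, QuotientGroup.ker_mk']

instance finite [Finite G] (π : F →* G) : Finite (HopfQuotient π) := by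
  set D := ⁅(⊤ : Subgroup F), π.ker⁆
  have : (center (F ⧸ D)).FiniteIndex := by
    have := finiteIndex_of_le (map_le_iff_le_comap.mp (map_ker_le_center π))
    exact ⟨index_comap_of_surjective _ (QuotientGroup.mk'_surjective D) ▸ this.index_ne_zero⟩
  have := Group.finite_commutatorSet_of_finiteIndex_center (F ⧸ D)
  have hC : D.relIndex (commutator F) ≠ 0 := by
    rw [← QuotientGroup.ker_mk' D, relIndex_ker, commutator_def, map_commutator,
      map_top_of_surjective _ (QuotientGroup.mk'_surjective D), ← commutator_def]
    exact Nat.card_pos.ne'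
  refine Nat.finite_of_card_ne_zero ?_
  rw [card_eq]
  exact fun h => hC (relIndex_eq_zero_of_le_right inf_le_right h)

variable {π₁ : F₁ →* G} {π₂ : F₂ →* G}

theorem map_ker_le (ψ : F₁ →* F₂) (h : π₂.comp ψ = π₁) : π₁.ker.map ψ ≤ π₂.ker := by
  rw [map_le_iff_le_comap, MonoidHom.comap_ker, h]

theorem map_ker_inf_commutator_le (ψ : F₁ →* F₂) (h : π₂.comp ψ = π₁) :
    (π₁.ker ⊓ commutator F₁).map ψ ≤ π₂.ker ⊓ commutator F₂ := by
  refine (map_inf_le _ _ _).trans (inf_le_inf (map_ker_le ψ h) ?_)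
  rw [commutator_def, commutator_def]
  exact map_commutator_top_le ψ le_top

def map (ψ : F₁ →* F₂) (h : π₂.comp ψ = π₁) : HopfQuotient π₁ →* HopfQuotient π₂ :=
  QuotientGroup.map _ _ ((ψ.comp (π₁.ker ⊓ commutator F₁).subtype).codRestrict _
      fun x => map_ker_inf_commutator_le ψ h (mem_map_of_mem ψ x.2))
    fun x hx => by
      rw [mem_comap, mem_subgroupOf]
      rw [mem_subgroupOf] at hx
      exact map_commutator_top_le ψ (map_ker_le ψ h) (mem_map_of_mem ψ hx)

theorem leftInverse_map {ψ : F₁ →* F₂} {σ : F₂ →* F₁} (hψ : π₂.comp ψ = π₁)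
    (hσ : π₁.comp σ = π₂) (hσψ : σ.comp ψ = .id F₁) : LeftInverse (map σ hσ) (map ψ hψ) := by
  rintro ⟨x⟩
  exact congrArg _ (Subtype.ext (DFunLike.congr_fun hσψ (x : F₁)))

end HopfQuotient

theorem card_schurMultiplier_le_card_hopfQuotient {X H : Type*} [Group H] [Finite H]
    (ρ : FreeGroup X →* H) (hρ : Surjective (ρ ∘ FreeGroup.of)) :
    Nat.card (schurMultiplier H) ≤ Nat.card (HopfQuotient ρ) := by
  have hsection : ∀ h, ρ (FreeGroup.of (surjInv hρ h)) = h := surjInv_eq hρ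
  -- the standard presentation of `H` is a retract of `ρ`, via a section of `ρ ∘ FreeGroup.of`
  refine Nat.card_le_card_of_injective _ (HopfQuotient.leftInverse_map
    (ψ := FreeGroup.map (surjInv hρ)) (σ := FreeGroup.map (ρ ∘ FreeGroup.of)) ?_ ?_ ?_).injective
  all_goals ext; simp [hsection]

section CentralQuotient

variable {F G H : Type*} [Group F] [Group G] [Group H]

theorem commutator_top_ker_comp_le_ker (π : F →* G) {φ : G →* H} (hφ : φ.ker ≤ center G) :
    ⁅(⊤ : Subgroup F), (φ.comp π).ker⁆ ≤ π.ker := by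
  rw [commutator_le]
  intro f _ s hs
  rw [MonoidHom.mem_ker, map_commutatorElement, commutatorElement_eq_one_iff_mul_comm]
  exact mem_center_iff.mp (hφ hs) (π f)

theorem card_hopfQuotient_comp_le [Finite G] (π : F →* G) {φ : G →* H} (hφ : φ.ker ≤ center G) :
    Nat.card (HopfQuotient (φ.comp π)) ≤
      Nat.card (HopfQuotient π) * Nat.card ↥(φ.ker ⊓ commutator G) := by
  rw [HopfQuotient.card_eq, HopfQuotient.card_eq]
  set R := π.ker
  set S := (φ.comp π).ker
  set C := commutator F
  have hfin : ⁅(⊤ : Subgroup F), R⁆.relIndex (R ⊓ C) ≠ 0 := Nat.card_pos.ne'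
  have hRS : R ≤ S := π.ker_le_comap φ.ker
  have hKRC : ⁅(⊤ : Subgroup F), S⁆ ≤ R ⊓ C :=
    le_inf (commutator_top_ker_comp_le_ker π hφ)
      ((commutator_mono le_rfl le_top).trans (commutator_def F).ge)
  have hRC : R ⊓ C = R ⊓ (S ⊓ C) := by rw [← inf_assoc, inf_eq_left.mpr hRS]
  rw [← relIndex_mul_relIndex _ _ _ hKRC (inf_le_inf_right C hRS)]
  refine Nat.mul_le_mul (relIndex_le_of_le_left (commutator_mono le_rfl hRS) hfin) ?_
  rw [hRC, inf_relIndex_right, relIndex_ker]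
  exact card_le_of_le (HopfQuotient.map_ker_inf_commutator_le π rfl)

end CentralQuotient

theorem card_schurMultiplier_abelianization_le_general (p n : ℕ) (hp : p.Prime)
    (G : Type*) [Group G] (hG : Nat.card G = p ^ n)
    (hG' : Nat.card (commutator G) = p) :
    Nat.card (schurMultiplier (Abelianization G)) ≤ Nat.card (schurMultiplier G) * p := by
  have : Fact p.Prime := ⟨hp⟩
  have : Finite G := Nat.finite_of_card_ne_zero (by simp [hG, hp.ne_zero])
  have hcentral : (Abelianization.of : G →* Abelianization G).ker ≤ center G := by
    rw [Abelianization.ker_of]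
    exact (IsPGroup.of_card hG).le_center_of_card_eq _ hG'
  calc Nat.card (schurMultiplier (Abelianization G))
      ≤ Nat.card (HopfQuotient (Abelianization.of.comp (FreeGroup.lift (id : G → G)))) :=
        card_schurMultiplier_le_card_hopfQuotient _ fun q => q.induction_on fun g => ⟨g, by simp⟩
    _ ≤ Nat.card (schurMultiplier G) * Nat.card ↥(Abelianization.of.ker ⊓ commutator G) :=
        card_hopfQuotient_comp_le _ hcentral
    _ = Nat.card (schurMultiplier G) * p := by rw [Abelianization.ker_of, inf_idem, hG']

/-- If `G` is a finite non-abelian `p`-group of order `p^n` with `|G'| = p`, then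
`|M(G)| * p ≥ |M(G/G')|`. -/
theorem card_schurMultiplier_abelianization_le (p n : ℕ) (hp : p.Prime)
    (G : Type*) [Group G] (hG : Nat.card G = p ^ n)
    (hna : ∃ a b : G, a * b ≠ b * a)
    (hG' : Nat.card (commutator G) = p) :
    Nat.card (schurMultiplier (Abelianization G)) ≤ Nat.card (schurMultiplier G) * p :=
  card_schurMultiplier_abelianization_le_general p n hp G hG hG'
end

section
/- Let G be a finite non-abelian p-group of order p^n (n ≥ 6) with |G'| = p and corank t(G) ≤ n + 1 (i.e. |M(G)| ≥ p^{n(n-1)/2 - n - 1}). Then the center Z(G) has exponent at most p². -/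
open Subgroup QuotientGroup
open scoped commutatorElement

theorem IsPGroup.exists_orderOf_pow_eq_pow_succ {G : Type*} [Group G] {p : ℕ} [Fact p.Prime]
    (hG : IsPGroup p G) {z : G} {k : ℕ} (hz : z ^ p ^ k ≠ 1) :
    ∃ j, orderOf (z ^ j) = p ^ (k + 1) := by
  obtain ⟨e, he⟩ := IsPGroup.iff_orderOf.mp hG z
  have hk : k + 1 ≤ e := by
    by_contra! h
    exact hz (orderOf_dvd_iff_pow_eq_one.mp (he ▸ pow_dvd_pow p (Nat.lt_succ_iff.mp h)))
  exact ⟨orderOf z / p ^ (k + 1),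
    orderOf_pow_orderOf_div (he ▸ (pow_pos (Fact.out : p.Prime).pos _).ne') (he ▸ pow_dvd_pow p hk)⟩

section Presentation

variable {F : Type*} [Group F]

/-- For a presentation `G = F ⧸ N`, this is `|M(G)| = |(N ⊓ [F,F]) ⧸ [F,N]|` by Hopf's formula
(`0` when that quotient is infinite). -/
noncomputable def hopfIndex (N : Subgroup F) : ℕ :=
  ⁅(⊤ : Subgroup F), N⁆.relIndex (N ⊓ commutator F)

theorem hopfIndex_top : hopfIndex (⊤ : Subgroup F) = 1 := by
  rw [hopfIndex, top_inf_eq, _root_.commutator_def, relIndex_self]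

theorem Subgroup.commutator_top_le_iff_le_upperCentralSeriesStep {H X : Subgroup F} [X.Normal] :
    ⁅(⊤ : Subgroup F), H⁆ ≤ X ↔ H ≤ X.upperCentralSeriesStep := by
  rw [commutator_comm, commutator_le]
  exact ⟨fun h s hs g => h s hs g (mem_top g), fun h s hs g _ => h hs g⟩

theorem Subgroup.normal_of_commutator_top_le {H : Subgroup F} (h : ⁅(⊤ : Subgroup F), H⁆ ≤ H) :
    H.Normal :=
  ⟨fun s hs g => by
    have := mul_mem (h (commutator_mem_commutator (mem_top g) hs)) hs
    rwa [commutatorElement_def, inv_mul_cancel_right] at this⟩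

theorem Subgroup.normal_of_le_center {H : Subgroup F} (h : H ≤ center F) : H.Normal :=
  ⟨fun s hs g => by rwa [mem_center_iff.mp (h hs) g, mul_inv_cancel_right]⟩

theorem MonoidHom.commutator_mem_ker_of_map_mem_center {Q : Type*} [Group Q] (f : F →* Q) {σ : F}
    (hσ : f σ ∈ center Q) (x : F) : ⁅x, σ⁆ ∈ f.ker := by
  rw [MonoidHom.mem_ker, map_commutatorElement, commutatorElement_eq_one_iff_mul_comm]
  exact mem_center_iff.mp hσ (f x)

theorem MonoidHom.ker_sup_zpowers_eq_comap {Q : Type*} [Group Q] (f : F →* Q) (σ : F) :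
    f.ker ⊔ zpowers σ = (zpowers (f σ)).comap f := by
  rw [← MonoidHom.map_zpowers, comap_map_eq, sup_comm]

theorem MonoidHom.index_ker_sup_zpowers_mul_orderOf {Q : Type*} [Group Q] {f : F →* Q}
    (hf : Function.Surjective f) (σ : F) :
    (f.ker ⊔ zpowers σ).index * orderOf (f σ) = Nat.card Q := by
  rw [ker_sup_zpowers_eq_comap, index_comap_of_surjective _ hf, ← Nat.card_zpowers,
    index_mul_card]

theorem Subgroup.commutator_top_sup_zpowers_le {N X : Subgroup F} [X.Normal] {σ : F}
    (hN : ⁅(⊤ : Subgroup F), N⁆ ≤ X) (hσ : ∀ x : F, ⁅x, σ⁆ ∈ X) :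
    ⁅(⊤ : Subgroup F), N ⊔ zpowers σ⁆ ≤ X := by
  rw [commutator_top_le_iff_le_upperCentralSeriesStep] at hN ⊢
  exact sup_le hN (zpowers_le.mpr fun x => by rw [← commutatorElement_inv]; exact inv_mem (hσ x))

section CentralModulo

variable {N : Subgroup F} [N.Normal] {σ : F}

theorem mk_mem_center_of_mem {ν : F} (hν : ν ∈ N) :
    (ν : F ⧸ ⁅(⊤ : Subgroup F), N⁆) ∈ center (F ⧸ ⁅(⊤ : Subgroup F), N⁆) := by
  refine mem_center_iff.mpr fun g => ?_
  induction g using QuotientGroup.induction_on with | H g => ?_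
  rw [← commutatorElement_eq_one_iff_mul_comm]
  exact (eq_one_iff _).mpr (commutator_mem_commutator (mem_top g) hν)

theorem normal_sup_zpowers (hσ : ∀ x : F, ⁅x, σ⁆ ∈ N) : (N ⊔ zpowers σ).Normal :=
  normal_of_commutator_top_le
    ((commutator_top_sup_zpowers_le (commutator_le_right _ _) hσ).trans le_sup_left)

def commutatorModHom (hσ : ∀ x : F, ⁅x, σ⁆ ∈ N) : F →* F ⧸ ⁅(⊤ : Subgroup F), N⁆ where
  toFun x := ((⁅x, σ⁆ : F) : F ⧸ ⁅(⊤ : Subgroup F), N⁆)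
  map_one' := by rw [commutatorElement_one_left, QuotientGroup.mk_one]
  map_mul' x y := by
    have hx := mem_center_iff.mp (mk_mem_center_of_mem (hσ x))
    have hy := mem_center_iff.mp (mk_mem_center_of_mem (hσ y))
    have : ⁅x * y, σ⁆ = x * ⁅y, σ⁆ * x⁻¹ * ⁅x, σ⁆ := by
      simp only [commutatorElement_def]; group
    rw [this, QuotientGroup.mk_mul, QuotientGroup.mk_mul, QuotientGroup.mk_mul, hy,
      QuotientGroup.mk_inv, mul_inv_cancel_right, hx]

theorem sup_zpowers_le_ker_commutatorModHom (hσ : ∀ x : F, ⁅x, σ⁆ ∈ N) :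
    N ⊔ zpowers σ ≤ (commutatorModHom hσ).ker := by
  refine sup_le (fun ν hν => ?_) (zpowers_le.mpr ?_) <;> rw [MonoidHom.mem_ker]
  · refine (eq_one_iff _).mpr ?_
    rw [← commutatorElement_inv]
    exact inv_mem (commutator_mem_commutator (mem_top σ) hν)
  · exact (eq_one_iff _).mpr (by rw [commutatorElement_self]; exact one_mem _)

theorem commutator_top_sup_zpowers_le_comap_range (hσ : ∀ x : F, ⁅x, σ⁆ ∈ N) :
    ⁅(⊤ : Subgroup F), N ⊔ zpowers σ⁆ ≤ (commutatorModHom hσ).range.comap (mk' _) := by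
  have : (commutatorModHom hσ).range.Normal :=
    normal_of_le_center (by rintro _ ⟨x, rfl⟩; exact mk_mem_center_of_mem (hσ x))
  refine commutator_top_sup_zpowers_le ?_ fun x => ⟨x, rfl⟩
  intro ν hν
  rw [mem_comap, mk'_apply, (eq_one_iff ν).mpr hν]
  exact one_mem _

theorem relIndex_commutator_top_dvd_index (hσ : ∀ x : F, ⁅x, σ⁆ ∈ N) :
    ⁅(⊤ : Subgroup F), N⁆.relIndex ⁅(⊤ : Subgroup F), N ⊔ zpowers σ⁆ ∣
      (N ⊔ zpowers σ).index := by
  rw [← ker_mk' ⁅(⊤ : Subgroup F), N⁆, ← MonoidHom.comap_bot, relIndex_comap, relIndex_bot_left]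
  calc Nat.card ↥(⁅(⊤ : Subgroup F), N ⊔ zpowers σ⁆.map (mk' _))
      ∣ Nat.card (commutatorModHom hσ).range :=
        card_dvd_of_le (map_le_iff_le_comap.mpr (commutator_top_sup_zpowers_le_comap_range hσ))
    _ = (commutatorModHom hσ).ker.index := (index_ker _).symm
    _ ∣ (N ⊔ zpowers σ).index := index_dvd_of_le (sup_zpowers_le_ker_commutatorModHom hσ)

theorem hopfIndex_dvd_index_mul (hσ : ∀ x : F, ⁅x, σ⁆ ∈ N) :
    hopfIndex N ∣ (N ⊔ zpowers σ).index * hopfIndex (N ⊔ zpowers σ) := by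
  have := normal_sup_zpowers hσ
  set W := ⁅(⊤ : Subgroup F), N⁆
  set W' := ⁅(⊤ : Subgroup F), N ⊔ zpowers σ⁆
  set K := N ⊓ commutator F
  set K' := (N ⊔ zpowers σ) ⊓ commutator F
  have hF' {H : Subgroup F} : ⁅(⊤ : Subgroup F), H⁆ ≤ commutator F := by
    rw [_root_.commutator_def]; exact commutator_mono le_rfl le_top
  have hW'K' : W' ≤ K' :=
    le_inf ((commutator_top_sup_zpowers_le (commutator_le_right _ _) hσ).trans le_sup_left) hF'
  have hWK : W ≤ K ⊓ W' :=
    le_inf (le_inf (commutator_le_right _ _) hF') (commutator_mono le_rfl le_sup_left)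
  have hKK' : K ⊔ W' ≤ K' := sup_le (inf_le_inf_right _ le_sup_left) hW'K'
  -- `K ⧸ (K ⊓ W')` embeds in `K' ⧸ W'`, and `(K ⊓ W') ⧸ W` in `W' ⧸ W`
  calc hopfIndex N = W.relIndex (K ⊓ W') * W'.relIndex (K ⊔ W') := by
        rw [relIndex_sup_right, ← inf_relIndex_right W' K, inf_comm W' K,
          relIndex_mul_relIndex W (K ⊓ W') K hWK inf_le_left]
        rfl
    _ ∣ W.relIndex W' * W'.relIndex K' :=
        mul_dvd_mul (Dvd.intro _ (relIndex_mul_relIndex _ _ _ hWK inf_le_right))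
          (Dvd.intro _ (relIndex_mul_relIndex _ _ _ le_sup_right hKK'))
    _ ∣ (N ⊔ zpowers σ).index * hopfIndex (N ⊔ zpowers σ) :=
        mul_dvd_mul_right (relIndex_commutator_top_dvd_index hσ) _

theorem hopfIndex_dvd_pow_choose {p m : ℕ} (hσ : ∀ x : F, ⁅x, σ⁆ ∈ N)
    (hidx : (N ⊔ zpowers σ).index = p ^ m)
    (hN' : hopfIndex (N ⊔ zpowers σ) ∣ p ^ m.choose 2) :
    hopfIndex N ∣ p ^ (m + 1).choose 2 := by
  rw [Nat.choose_succ_succ', Nat.choose_one_right, pow_add]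
  exact (hopfIndex_dvd_index_mul hσ).trans (hidx ▸ mul_dvd_mul_left _ hN')

end CentralModulo

/-- Green's theorem on the order of the Schur multiplier of a `p`-group. -/
theorem hopfIndex_dvd_of_index_eq_pow {p : ℕ} (hp : p.Prime) {m : ℕ} (N : Subgroup F) [N.Normal]
    (hN : N.index = p ^ m) : hopfIndex N ∣ p ^ m.choose 2 := by
  induction m generalizing N with
  | zero =>
    rw [pow_zero, index_eq_one] at hN
    subst hN
    rw [hopfIndex_top]
    exact one_dvd _
  | succ m ih =>
    have : Fact p.Prime := ⟨hp⟩
    have hcard : Nat.card (F ⧸ N) = p ^ (m + 1) := hN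
    have : Finite (F ⧸ N) :=
      Nat.finite_of_card_ne_zero (by rw [hcard]; exact (pow_pos hp.pos _).ne')
    have : Nontrivial (F ⧸ N) :=
      Finite.one_lt_card_iff_nontrivial.mp (hcard ▸ Nat.one_lt_pow (by omega) hp.one_lt)
    have hpQ : IsPGroup p (F ⧸ N) := IsPGroup.of_card hcard
    have := hpQ.center_nontrivial
    obtain ⟨z, hz⟩ := exists_ne (1 : center (F ⧸ N))
    obtain ⟨j, hj⟩ :=
      (hpQ.to_subgroup _).exists_orderOf_pow_eq_pow_succ (k := 0) (by simpa using hz)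
    rw [zero_add, pow_one] at hj
    obtain ⟨σ, hσ⟩ := QuotientGroup.mk'_surjective N ((z ^ j : center (F ⧸ N)) : F ⧸ N)
    have hσc := (mk' N).commutator_mem_ker_of_map_mem_center (hσ ▸ (z ^ j).2)
    rw [ker_mk'] at hσc
    have hidx : (N ⊔ zpowers σ).index = p ^ m := by
      have := MonoidHom.index_ker_sup_zpowers_mul_orderOf (mk'_surjective N) σ
      rw [ker_mk', hσ, orderOf_submonoid, hj, hcard, pow_succ] at this
      exact Nat.eq_of_mul_eq_mul_right hp.pos this
    have := normal_sup_zpowers hσc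
    exact hopfIndex_dvd_pow_choose hσc hidx (ih _ hidx)

end Presentation

theorem Nat.choose_two_sub_two_lt {n : ℕ} (hn : 5 ≤ n) :
    (n - 2).choose 2 < n.choose 2 - n - 1 := by
  obtain ⟨m, rfl⟩ : ∃ m, n = m + 2 := ⟨n - 2, by omega⟩
  rw [Nat.add_sub_cancel, Nat.choose_succ_succ' (m + 1) 1, Nat.choose_succ_succ' m 1,
    Nat.choose_one_right, Nat.choose_one_right]
  simp only [Nat.reduceAdd]
  omega

theorem card_schurMultiplier_eq_hopfIndex (G : Type*) [Group G] :
    Nat.card (schurMultiplier G) = hopfIndex (FreeGroup.lift (id : G → G)).ker :=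
  rfl

theorem card_schurMultiplier_dvd {p : ℕ} (hp : p.Prime) {G : Type*} [Group G] {m k : ℕ}
    (hG : Nat.card G = p ^ (m + k)) {w : G} (hw : w ∈ center G) (hwo : orderOf w = p ^ k) :
    Nat.card (schurMultiplier G) ∣ p ^ (m + 1).choose 2 := by
  rw [card_schurMultiplier_eq_hopfIndex]
  set π := FreeGroup.lift (id : G → G)
  have hπ : Function.Surjective π := fun g => ⟨FreeGroup.of g, FreeGroup.lift_apply_of⟩
  have hπσ : π (FreeGroup.of w) = w := FreeGroup.lift_apply_of
  have hσ := π.commutator_mem_ker_of_map_mem_center (hπσ ▸ hw)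
  have hidx : (π.ker ⊔ zpowers (FreeGroup.of w)).index = p ^ m := by
    have := MonoidHom.index_ker_sup_zpowers_mul_orderOf hπ (FreeGroup.of w)
    rw [hπσ, hwo, hG, pow_add] at this
    exact Nat.eq_of_mul_eq_mul_right (pow_pos hp.pos k) this
  have := normal_sup_zpowers hσ
  exact hopfIndex_dvd_pow_choose hσ hidx (hopfIndex_dvd_of_index_eq_pow hp _ hidx)

theorem center_exponent_le_of_large_schurMultiplier_general (p n : ℕ) (hp : p.Prime) (hn : 6 ≤ n)
    (G : Type*) [Group G] (hG : Nat.card G = p ^ n)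
    (hM : p ^ (n * (n - 1) / 2 - n - 1) ≤ Nat.card (schurMultiplier G)) :
    Monoid.exponent ↥(Subgroup.center G) ≤ p ^ 2 := by
  have : Fact p.Prime := ⟨hp⟩
  refine Nat.le_of_dvd (pow_pos hp.pos 2) (Monoid.exponent_dvd_of_forall_pow_eq_one fun z => ?_)
  by_contra hz
  obtain ⟨j, hj⟩ := ((IsPGroup.of_card hG).to_subgroup _).exists_orderOf_pow_eq_pow_succ hz
  have hM' := hM.trans <| Nat.le_of_dvd (pow_pos hp.pos _) <|
    card_schurMultiplier_dvd hp (m := n - 3) (hG.trans (by congr 1; omega)) (z ^ j).2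
      ((orderOf_submonoid _).trans hj)
  rw [Nat.pow_le_pow_iff_right hp.one_lt, ← Nat.choose_two_right,
    show n - 3 + 1 = n - 2 by omega] at hM'
  exact (Nat.choose_two_sub_two_lt (by omega)).not_ge hM'

/-- If `G` is a non-abelian `p`-group of order `p^n` (`n ≥ 6`) with `|G'| = p` and corank
`t(G) ≤ n + 1` (i.e. `|M(G)| ≥ p^(n(n-1)/2 - n - 1)`), then `Z(G)` has exponent at most
`p^2`. -/
theorem center_exponent_le_of_large_schurMultiplier (p n : ℕ) (hp : p.Prime) (hn : 6 ≤ n)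
    (G : Type*) [Group G] (hG : Nat.card G = p ^ n)
    (hna : ∃ a b : G, a * b ≠ b * a)
    (hG' : Nat.card (commutator G) = p)
    (hM : p ^ (n * (n - 1) / 2 - n - 1) ≤ Nat.card (schurMultiplier G)) :
    Monoid.exponent ↥(Subgroup.center G) ≤ p ^ 2 :=
  center_exponent_le_of_large_schurMultiplier_general p n hp hn G hG hM
end
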